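/- arXiv:1902.05222 — 2 statements merged into one kernel-verified Lean document; each statement's English description precedes it below -/
import Mathlib

section
/- For ℓ = 6: in the 5-vertex graph H* on vertices v_0,...,v_4 (K_4 on v_0,...,v_3 with c(v_iv_j)=i+j, plus v_4 adjacent to v_3 and v_2 with c(v_4v_3)=7, c(v_4v_2)=6), the intersection over all rainbow Hamiltonian paths starting at v_2 of their edge-color sets equals {1, 7}, and the intersection over all rainbow Hamiltonian paths starting at v_3 of their edge-color sets equals {1, 6}. -/
/-- Color of the pair `{i,j}`: `i+j` within `K_{ℓ-2}` (indices `≤ ℓ-3`); the two special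
edges at `v_{ℓ-2}` (index `ℓ-2`) get colors `2ℓ-5`/`2ℓ-6`. -/
def colFun (ℓ i j : ℕ) : ℕ :=
  if max i j ≤ ℓ - 3 then min i j + max i j
  else (if min i j = ℓ - 3 then 2*ℓ-5 else 2*ℓ-6)

theorem colFun_symm (ℓ i j : ℕ) : colFun ℓ i j = colFun ℓ j i := by
  unfold colFun; simp only [min_comm i j, max_comm i j]

/-- The edge coloring of `H* = H \ x` as a function on unordered pairs of vertices. -/
def colS (ℓ : ℕ) : Sym2 (Fin (ℓ-1)) → ℕ :=
  Sym2.lift ⟨fun i j => colFun ℓ (i : ℕ) (j : ℕ), fun i j => colFun_symm ℓ i j⟩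

/-- The graph `H* = H \ x`: `K_{ℓ-2}` on `v_0,…,v_{ℓ-3}` (indices `0,…,ℓ-3`), plus the
vertex `v_{ℓ-2}` (index `ℓ-2`) joined to `v_{ℓ-3}` and `v_{ℓ-4}`. -/
def HGstar (ℓ : ℕ) : SimpleGraph (Fin (ℓ-1)) :=
  SimpleGraph.fromRel (fun i j =>
    ((i : ℕ) ≤ ℓ - 3 ∧ (j : ℕ) ≤ ℓ - 3) ∨
    ((i : ℕ) = ℓ - 2 ∧ ((j : ℕ) = ℓ - 3 ∨ (j : ℕ) = ℓ - 4)))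

instance (ℓ : ℕ) : DecidableRel (HGstar ℓ).Adj := fun a b =>
  inferInstanceAs (Decidable (a ≠ b ∧
    ((((a : ℕ) ≤ ℓ - 3 ∧ (b : ℕ) ≤ ℓ - 3) ∨
      ((a : ℕ) = ℓ - 2 ∧ ((b : ℕ) = ℓ - 3 ∨ (b : ℕ) = ℓ - 4))) ∨
     (((b : ℕ) ≤ ℓ - 3 ∧ (a : ℕ) ≤ ℓ - 3) ∨
      ((b : ℕ) = ℓ - 2 ∧ ((a : ℕ) = ℓ - 3 ∨ (a : ℕ) = ℓ - 4))))))

lemma walk_edges_zip {V} {G : SimpleGraph V} {u w : V} (p : G.Walk u w) :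
    p.edges = List.zipWith (fun a b => s(a,b)) p.support p.support.tail := by
  induction p with
  | nil => rfl
  | cons h q ih =>
    rw [SimpleGraph.Walk.edges_cons, SimpleGraph.Walk.support_cons, ih,
        SimpleGraph.Walk.support_eq_cons q]
    rfl

lemma list_len4 {α : Type*} : ∀ (l : List α), l.length = 4 → ∃ a b c d, l = [a,b,c,d]
  | [a,b,c,d], _ => ⟨a,b,c,d, rfl⟩
  | [], h => by simp at h
  | [_], h => by simp at h
  | [_,_], h => by simp at h
  | [_,_,_], h => by simp at h
  | _::_::_::_::_::_, h => by simp at h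

instance : DecidableRel (HGstar 6).Adj :=
  inferInstanceAs (DecidableRel (HGstar 6).Adj)

lemma check2 : ∀ a b c d : Fin 5, (([2,a,b,c,d] : List (Fin 5)).Nodup ∧
    (HGstar 6).Adj 2 a ∧ (HGstar 6).Adj a b ∧ (HGstar 6).Adj b c ∧ (HGstar 6).Adj c d ∧
    (([s(2,a), s(a,b), s(b,c), s(c,d)] : List (Sym2 (Fin 5))).map (colS 6)).Nodup) →
    1 ∈ (([s(2,a), s(a,b), s(b,c), s(c,d)] : List (Sym2 (Fin 5))).map (colS 6)) ∧
    7 ∈ (([s(2,a), s(a,b), s(b,c), s(c,d)] : List (Sym2 (Fin 5))).map (colS 6)) := by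
  decide

lemma check3 : ∀ a b c d : Fin 5, (([3,a,b,c,d] : List (Fin 5)).Nodup ∧
    (HGstar 6).Adj 3 a ∧ (HGstar 6).Adj a b ∧ (HGstar 6).Adj b c ∧ (HGstar 6).Adj c d ∧
    (([s(3,a), s(a,b), s(b,c), s(c,d)] : List (Sym2 (Fin 5))).map (colS 6)).Nodup) →
    1 ∈ (([s(3,a), s(a,b), s(b,c), s(c,d)] : List (Sym2 (Fin 5))).map (colS 6)) ∧
    6 ∈ (([s(3,a), s(a,b), s(b,c), s(c,d)] : List (Sym2 (Fin 5))).map (colS 6)) := by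
  decide

lemma reduce {u w : Fin 5} (p : (HGstar 6).Walk u w) (hp : p.IsHamiltonian) :
    ∃ a b c d : Fin 5, ([u,a,b,c,d] : List (Fin 5)).Nodup ∧
      (HGstar 6).Adj u a ∧ (HGstar 6).Adj a b ∧ (HGstar 6).Adj b c ∧ (HGstar 6).Adj c d ∧
      p.edges = [s(u,a), s(a,b), s(b,c), s(c,d)] := by
  have hlen : p.support.tail.length = 4 := by
    have h1 := p.length_support
    have h2 := hp.length_eq
    simp only [Fintype.card_fin] at h2
    simp only [List.length_tail, h1, h2]
  obtain ⟨a,b,c,d,ht⟩ := list_len4 _ hlen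
  have hs : p.support = [u,a,b,c,d] := by rw [p.support_eq_cons, ht]
  have hedges : p.edges = [s(u,a), s(a,b), s(b,c), s(c,d)] := by
    rw [walk_edges_zip, hs]; rfl
  have hnd : p.support.Nodup := hp.isPath.support_nodup
  have hchain := p.isChain_adj_support
  rw [hs] at hnd hchain
  simp only [List.isChain_cons_cons, List.isChain_singleton, and_true] at hchain
  exact ⟨a,b,c,d, hnd, hchain.1, hchain.2.1, hchain.2.2.1, hchain.2.2.2, hedges⟩

def W1 : (HGstar 6).Walk 2 4 :=
  SimpleGraph.Walk.cons (show (HGstar 6).Adj 2 0 by decide)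
    (SimpleGraph.Walk.cons (show (HGstar 6).Adj 0 1 by decide)
      (SimpleGraph.Walk.cons (show (HGstar 6).Adj 1 3 by decide)
        (SimpleGraph.Walk.cons (show (HGstar 6).Adj 3 4 by decide) SimpleGraph.Walk.nil)))

def W2 : (HGstar 6).Walk 2 1 :=
  SimpleGraph.Walk.cons (show (HGstar 6).Adj 2 4 by decide)
    (SimpleGraph.Walk.cons (show (HGstar 6).Adj 4 3 by decide)
      (SimpleGraph.Walk.cons (show (HGstar 6).Adj 3 0 by decide)
        (SimpleGraph.Walk.cons (show (HGstar 6).Adj 0 1 by decide) SimpleGraph.Walk.nil)))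

def W3 : (HGstar 6).Walk 3 4 :=
  SimpleGraph.Walk.cons (show (HGstar 6).Adj 3 1 by decide)
    (SimpleGraph.Walk.cons (show (HGstar 6).Adj 1 0 by decide)
      (SimpleGraph.Walk.cons (show (HGstar 6).Adj 0 2 by decide)
        (SimpleGraph.Walk.cons (show (HGstar 6).Adj 2 4 by decide) SimpleGraph.Walk.nil)))

def W4 : (HGstar 6).Walk 3 1 :=
  SimpleGraph.Walk.cons (show (HGstar 6).Adj 3 4 by decide)
    (SimpleGraph.Walk.cons (show (HGstar 6).Adj 4 2 by decide)
      (SimpleGraph.Walk.cons (show (HGstar 6).Adj 2 0 by decide)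
        (SimpleGraph.Walk.cons (show (HGstar 6).Adj 0 1 by decide) SimpleGraph.Walk.nil)))

def W5 : (HGstar 6).Walk 3 0 :=
  SimpleGraph.Walk.cons (show (HGstar 6).Adj 3 4 by decide)
    (SimpleGraph.Walk.cons (show (HGstar 6).Adj 4 2 by decide)
      (SimpleGraph.Walk.cons (show (HGstar 6).Adj 2 1 by decide)
        (SimpleGraph.Walk.cons (show (HGstar 6).Adj 1 0 by decide) SimpleGraph.Walk.nil)))

/-- for `ℓ = 6`, in `H*` (`K_4` on `v_0,…,v_3` with `c(v_iv_j)=i+j`, plus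
`v_4` joined to `v_3, v_2` with colors `7, 6`), the intersection of the color sets of all
rainbow Hamiltonian paths starting at `v_2` is `{1, 7}`, and starting at `v_3` it is
`{1, 6}`. -/
theorem stmt8 :
    {k : ℕ | ∀ (w : Fin 5) (p : (HGstar 6).Walk 2 w), p.IsHamiltonian →
        (p.edges.map (colS 6)).Nodup → k ∈ p.edges.map (colS 6)} = {1, 7} ∧
    {k : ℕ | ∀ (w : Fin 5) (p : (HGstar 6).Walk 3 w), p.IsHamiltonian →
        (p.edges.map (colS 6)).Nodup → k ∈ p.edges.map (colS 6)} = {1, 6} := by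
  constructor
  · ext k
    simp only [Set.mem_setOf_eq, Set.mem_insert_iff, Set.mem_singleton_iff]
    constructor
    · intro h
      have h1 := h 4 W1 (by unfold SimpleGraph.Walk.IsHamiltonian; decide) (by decide)
      have h2 := h 1 W2 (by unfold SimpleGraph.Walk.IsHamiltonian; decide) (by decide)
      rw [show W1.edges.map (colS 6) = [2,1,4,7] from rfl] at h1
      rw [show W2.edges.map (colS 6) = [6,7,3,1] from rfl] at h2
      simp only [List.mem_cons, List.not_mem_nil, or_false] at h1 h2
      omega
    · rintro (rfl | rfl) w p hp hr <;>
      · obtain ⟨a,b,c,d,h1,h2,h3,h4,h5,he⟩ := reduce p hp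
        rw [he] at hr ⊢
        first
        | exact (check2 a b c d ⟨h1,h2,h3,h4,h5,hr⟩).1
        | exact (check2 a b c d ⟨h1,h2,h3,h4,h5,hr⟩).2
  · ext k
    simp only [Set.mem_setOf_eq, Set.mem_insert_iff, Set.mem_singleton_iff]
    constructor
    · intro h
      have h1 := h 4 W3 (by unfold SimpleGraph.Walk.IsHamiltonian; decide) (by decide)
      have h2 := h 1 W4 (by unfold SimpleGraph.Walk.IsHamiltonian; decide) (by decide)
      rw [show W3.edges.map (colS 6) = [4,1,2,6] from rfl] at h1
      have h3 := h 0 W5 (by unfold SimpleGraph.Walk.IsHamiltonian; decide) (by decide)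
      rw [show W4.edges.map (colS 6) = [7,6,2,1] from rfl] at h2
      rw [show W5.edges.map (colS 6) = [7,6,3,1] from rfl] at h3
      simp only [List.mem_cons, List.not_mem_nil, or_false] at h1 h2 h3
      omega
    · rintro (rfl | rfl) w p hp hr <;>
      · obtain ⟨a,b,c,d,h1,h2,h3,h4,h5,he⟩ := reduce p hp
        rw [he] at hr ⊢
        first
        | exact (check3 a b c d ⟨h1,h2,h3,h4,h5,hr⟩).1
        | exact (check3 a b c d ⟨h1,h2,h3,h4,h5,hr⟩).2
end

section
/- Let H* = H \ {x} with ℓ odd, ℓ ≥ 7, be the (ℓ-1)-vertex graph consisting of K_{ℓ-2} on v_0,...,v_{ℓ-3} colored c(v_iv_j)=i+j plus vertex v_{ℓ-2} adjacent to v_{ℓ-3}, v_{ℓ-4} with colors 2ℓ-5, 2ℓ-6. Then the path v_0, v_1, v_3, v_5, ..., v_{ℓ-4}, v_{ℓ-2}, v_{ℓ-3}, v_{ℓ-5}, ..., v_4, v_2 is a rainbow Hamiltonian path of H*, and all its edge colors are even except for colors 1 and 2ℓ-5. -/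
/-- Build a walk from a vertex sequence `f 0, f 1, …, f k` with consecutive vertices
adjacent. -/
def walkFn {V : Type*} {G : SimpleGraph V} (f : ℕ → V) :
    ∀ k, (∀ i, i < k → G.Adj (f i) (f (i+1))) → G.Walk (f 0) (f k)
  | 0, _ => SimpleGraph.Walk.nil
  | k+1, h => (walkFn f k (fun i hi => h i (by omega))).concat (h k (by omega))

lemma walkFn_support {V : Type*} {G : SimpleGraph V} (f : ℕ → V) (k : ℕ)
    (h : ∀ i, i < k → G.Adj (f i) (f (i+1))) :
    (walkFn f k h).support = (List.range (k+1)).map f := by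
  induction k with
  | zero => simp [walkFn, List.range_succ]
  | succ k ih => simp [walkFn, ih, List.range_succ]

lemma walkFn_edges {V : Type*} {G : SimpleGraph V} (f : ℕ → V) (k : ℕ)
    (h : ∀ i, i < k → G.Adj (f i) (f (i+1))) :
    (walkFn f k h).edges = (List.range k).map (fun i => s(f i, f (i+1))) := by
  induction k with
  | zero => simp [walkFn, List.range_succ]
  | succ k ih => simp [walkFn, ih, List.range_succ]

/-- the `i`-th vertex (as a natural number) of the path in statement 10 -/
def gfun (m i : ℕ) : ℕ :=
  if i = 0 then 0 else if i ≤ m then 2*i-1 else if i = m+1 then 2*m+1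
  else if i = m+2 then 2*m else 4*m+4-2*i

/-- the `i`-th edge color of the path in statement 10 -/
def hfun (m i : ℕ) : ℕ :=
  if i = 0 then 1 else if i ≤ m-1 then 4*i else if i = m then 4*m
  else if i = m+1 then 4*m+1 else if i = m+2 then 4*m-2 else 8*m+6-4*i

lemma gfun_list (m : ℕ) (hm : 2 ≤ m) :
    (List.range (2*m+2)).map (gfun m) =
      0 :: ((List.range m).map (fun i => 2*i+1) ++ [2*m+1, 2*m]
        ++ (List.range (m-1)).map (fun i => 2*m-2-2*i)) := by
  have r1 : List.range 1 = [0] := rfl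
  have r2 : List.range 2 = [0, 1] := rfl
  rw [show 2*m+2 = 1+m+2+(m-1) by omega, List.range_add, List.range_add, List.range_add]
  have e0 : gfun m 0 = 0 := by simp [gfun]
  have e1 : gfun m (1+m+0) = 2*m+1 := by
    unfold gfun; split_ifs <;> first | exact ‹False›.elim | omega
  have e2 : gfun m (1+m+1) = 2*m := by
    unfold gfun; split_ifs <;> first | exact ‹False›.elim | omega
  have e3 : (List.range m).map (gfun m ∘ fun x => 1+x) = (List.range m).map (fun i => 2*i+1) :=
    List.map_congr_left fun i hi => by
      simp only [Function.comp_apply]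
      rw [List.mem_range] at hi
      unfold gfun; split_ifs <;> first | exact ‹False›.elim | omega
  have e4 : (List.range (m-1)).map (gfun m ∘ fun x => 1+m+2+x)
      = (List.range (m-1)).map (fun i => 2*m-2-2*i) :=
    List.map_congr_left fun i hi => by
      simp only [Function.comp_apply]
      rw [List.mem_range] at hi
      unfold gfun; split_ifs <;> first | exact ‹False›.elim | omega
  simp only [List.map_append, List.map_map, r2, List.map_cons, List.map_nil, e3, e4, r1]
  rw [e0, e1, e2]
  simp [List.append_assoc]

open Fin.NatCast in
set_option maxHeartbeats 2000000 in
/-- for odd `ℓ ≥ 7`, the path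
`v_0, v_1, v_3, v_5, …, v_{ℓ-4}, v_{ℓ-2}, v_{ℓ-3}, v_{ℓ-5}, …, v_4, v_2` is a rainbow
Hamiltonian path of `H*`, and all its edge colors are even except for the colors `1` and
`2ℓ-5` (which do occur). -/
theorem stmt10 (ℓ : ℕ) (hℓ : 7 ≤ ℓ) (hodd : Odd ℓ) :
    ∃ p : (HGstar ℓ).Walk ⟨0, by omega⟩ ⟨2, by omega⟩,
      p.IsHamiltonian ∧ (p.edges.map (colS ℓ)).Nodup ∧
      p.support.map (Fin.val) =
        0 :: ((List.range ((ℓ - 3) / 2)).map (fun i => 2*i + 1)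
          ++ [ℓ - 2, ℓ - 3]
          ++ (List.range ((ℓ - 5) / 2)).map (fun i => ℓ - 5 - 2*i)) ∧
      (∀ k ∈ p.edges.map (colS ℓ), ¬ Even k → k = 1 ∨ k = 2*ℓ - 5) ∧
      (1 : ℕ) ∈ p.edges.map (colS ℓ) ∧ (2*ℓ - 5) ∈ p.edges.map (colS ℓ) := by
  obtain ⟨m, hm2, rfl⟩ : ∃ m, 2 ≤ m ∧ ℓ = 2*m+3 := by
    obtain ⟨k, hk⟩ := hodd; exact ⟨k-1, by omega, by omega⟩
  set ℓ := 2*m+3 with hℓdef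
  haveI : NeZero (ℓ-1) := ⟨by omega⟩
  set f : ℕ → Fin (ℓ-1) := fun i => (gfun m i : Fin (ℓ-1)) with hf
  have hgb : ∀ i, i ≤ 2*m+1 → gfun m i < 2*m+2 := by
    intro i hi; unfold gfun; split_ifs <;> first | exact ‹False›.elim | omega
  have hval : ∀ i, i ≤ 2*m+1 → (f i : ℕ) = gfun m i := by
    intro i hi
    simp only [hf, Fin.val_natCast]
    exact Nat.mod_eq_of_lt (by have := hgb i hi; omega)
  have hadj : ∀ i, i < 2*m+1 → (HGstar ℓ).Adj (f i) (f (i+1)) := by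
    intro i hi
    rw [HGstar, SimpleGraph.fromRel_adj]
    constructor
    · apply Fin.ne_of_val_ne
      rw [hval i (by omega), hval (i+1) (by omega)]
      unfold gfun; split_ifs <;> first | exact ‹False›.elim | omega
    · rw [hval i (by omega), hval (i+1) (by omega)]
      rcases eq_or_ne i m with rfl | h1
      · refine Or.inr (Or.inr ⟨?_, Or.inr ?_⟩) <;>
          (unfold gfun; split_ifs <;> first | exact ‹False›.elim | omega)
      rcases eq_or_ne i (m+1) with rfl | h2
      · refine Or.inl (Or.inr ⟨?_, Or.inl ?_⟩) <;>
          (unfold gfun; split_ifs <;> first | exact ‹False›.elim | omega)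
      · refine Or.inl (Or.inl ⟨?_, ?_⟩) <;>
          (unfold gfun; split_ifs <;> first | exact ‹False›.elim | omega)
  have h0 : f 0 = (⟨0, by omega⟩ : Fin (ℓ-1)) := by
    apply Fin.ext
    rw [hval 0 (by omega)]
    show gfun m 0 = 0
    simp [gfun]
  have h2 : f (2*m+1) = (⟨2, by omega⟩ : Fin (ℓ-1)) := by
    apply Fin.ext
    rw [hval (2*m+1) (by omega)]
    show gfun m (2*m+1) = 2
    unfold gfun; split_ifs <;> first | exact ‹False›.elim | omega
  have hsup : ((walkFn f (2*m+1) hadj).copy h0 h2).support = (List.range (2*m+2)).map f := by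
    rw [SimpleGraph.Walk.support_copy, walkFn_support]
  have hcolFun : ∀ i, i < 2*m+1 → colFun ℓ (gfun m i) (gfun m (i+1)) = hfun m i := by
    intro i hi
    unfold colFun gfun hfun
    split_ifs <;> first | exact ‹False›.elim | omega
  have hedges : ((walkFn f (2*m+1) hadj).copy h0 h2).edges.map (colS ℓ)
      = (List.range (2*m+1)).map (hfun m) := by
    rw [SimpleGraph.Walk.edges_copy, walkFn_edges, List.map_map]
    refine List.map_congr_left fun i hi => ?_
    rw [List.mem_range] at hi
    simp only [Function.comp_apply, colS, Sym2.lift_mk]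
    rw [hval i (by omega), hval (i+1) (by omega)]
    exact hcolFun i hi
  refine ⟨(walkFn f (2*m+1) hadj).copy h0 h2, ?_, ?_, ?_, ?_, ?_, ?_⟩
  · -- Hamiltonian
    intro v
    rw [hsup]
    have hnodup : ((List.range (2*m+2)).map f).Nodup := by
      refine List.Nodup.map_on ?_ List.nodup_range
      intro x hx y hy hxy
      rw [List.mem_range] at hx hy
      have hv : (f x : ℕ) = (f y : ℕ) := congrArg Fin.val hxy
      rw [hval x (by omega), hval y (by omega)] at hv
      revert hv
      unfold gfun; split_ifs <;> first | exact fun _ => ‹False›.elim | omega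
    have hmem : v ∈ (List.range (2*m+2)).map f := by
      have hvlt : (v : ℕ) < 2*m+2 := by have := v.isLt; omega
      obtain ⟨i, hi1, hi2⟩ : ∃ i, i < 2*m+2 ∧ gfun m i = (v : ℕ) := by
        refine ⟨if (v:ℕ) = 0 then 0 else if (v:ℕ) % 2 = 1 then ((v:ℕ)+1)/2
          else if (v:ℕ) = 2*m then m+2 else 2*m+2 - (v:ℕ)/2, ?_, ?_⟩ <;>
          (try unfold gfun) <;> split_ifs <;> first | exact ‹False›.elim | omega
      rw [List.mem_map]
      refine ⟨i, List.mem_range.mpr hi1, ?_⟩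
      apply Fin.ext
      rw [hval i (by omega), hi2]
    exact List.count_eq_one_of_mem hnodup hmem
  · -- rainbow
    rw [hedges]
    refine List.Nodup.map_on ?_ List.nodup_range
    intro x hx y hy hxy
    rw [List.mem_range] at hx hy
    revert hxy
    unfold hfun; split_ifs <;> first | exact fun _ => ‹False›.elim | omega
  · -- support values
    rw [hsup, List.map_map]
    have hLHS : (List.range (2*m+2)).map (Fin.val ∘ f) = (List.range (2*m+2)).map (gfun m) :=
      List.map_congr_left fun i hi => by
        rw [List.mem_range] at hi
        exact hval i (by omega)
    rw [hLHS, gfun_list m hm2]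
    have d1 : (ℓ-3)/2 = m := by omega
    have d2 : (ℓ-5)/2 = m-1 := by omega
    have d3 : ℓ-2 = 2*m+1 := by omega
    have d4 : ℓ-3 = 2*m := by omega
    have d5 : ∀ i : ℕ, ℓ-5-2*i = 2*m-2-2*i := fun i => by omega
    have d6 : 2*m/2 = m := by omega
    have d7 : (2*m-2)/2 = m-1 := by omega
    simp only [← hℓdef, d1, d2, d3, d4, d5, d6, d7]
  · -- parity
    rw [hedges]
    simp only [List.mem_map, List.mem_range]
    rintro k ⟨i, hi, rfl⟩ hk
    rw [Nat.not_even_iff] at hk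
    revert hk
    unfold hfun; split_ifs <;> first | exact fun _ => ‹False›.elim | (intro; omega)
  · -- 1 occurs
    rw [hedges, List.mem_map]
    exact ⟨0, List.mem_range.mpr (by omega), by simp [hfun]⟩
  · -- 2ℓ-5 occurs
    rw [hedges, List.mem_map]
    refine ⟨m+1, List.mem_range.mpr (by omega), ?_⟩
    unfold hfun; split_ifs <;> first | exact ‹False›.elim | omega
end
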